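/- Let s ≥ t ≥ 1 be integers. For all integers r and i, m_{s,t}(r,i) = 1 if and only if the point (r,i), viewed in ℝ², lies in the convex hull of the five points (s+t−1, 0), (t, s−1), (t, −(s−1)), (1, s−t), (1, −(s−t)), and moreover i ≡ s + t − 1 − r (mod 2). That is, the support of m_{s,t} consists exactly of the integer points of the stated convex pentagon satisfying the parity condition. -/
import Mathlib


private lemma boyer_mem5 (A1 A2 B1 B2 C1 C2 D1 D2 E1 E2 x y a b c d e : ℝ)
    (ha : 0 ≤ a) (hb : 0 ≤ b) (hc : 0 ≤ c) (hd : 0 ≤ d) (he : 0 ≤ e)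
    (hW : 0 < a + b + c + d + e)
    (hx : (a + b + c + d + e) * x = a * A1 + b * B1 + c * C1 + d * D1 + e * E1)
    (hy : (a + b + c + d + e) * y = a * A2 + b * B2 + c * C2 + d * D2 + e * E2) :
    (x, y) ∈ convexHull ℝ ({(A1, A2), (B1, B2), (C1, C2), (D1, D2), (E1, E2)} : Set (ℝ × ℝ)) := by
  have hWne : a + b + c + d + e ≠ 0 := ne_of_gt hW
  set w : Fin 5 → ℝ := ![a, b, c, d, e] with hw
  set P : Fin 5 → ℝ × ℝ := ![(A1, A2), (B1, B2), (C1, C2), (D1, D2), (E1, E2)] with hP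
  have key := Finset.centerMass_mem_convexHull (Finset.univ : Finset (Fin 5))
    (w := w) (z := P) (s := ({(A1, A2), (B1, B2), (C1, C2), (D1, D2), (E1, E2)} : Set (ℝ × ℝ)))
    (fun i _ => by fin_cases i <;> simpa [hw])
    (by simp [hw, Fin.sum_univ_five]; linarith)
    (fun i _ => by fin_cases i <;> simp [hP])
  have : Finset.univ.centerMass w P = (x, y) := by
    rw [Finset.centerMass]
    simp only [hw, hP, Fin.sum_univ_five, Matrix.cons_val_zero, Matrix.cons_val_one,
      Matrix.head_cons, Matrix.cons_val_two, Matrix.tail_cons, Matrix.cons_val_three,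
      Matrix.cons_val_four]
    rw [inv_smul_eq_iff₀ hWne]
    simp only [Prod.smul_mk, Prod.mk_add_mk, smul_eq_mul, Prod.mk.injEq]
    constructor <;> [linarith [hx]; linarith [hy]]
  rwa [this] at key

set_option maxHeartbeats 400000 in
private lemma boyer_hull_iff_real (σ τ x y : ℝ) (ht : 1 ≤ τ) (hts : τ ≤ σ) :
    (x, y) ∈ convexHull ℝ
        ({(σ + τ - 1, 0), (τ, σ - 1), (τ, -(σ - 1)), (1, σ - τ), (1, -(σ - τ))} : Set (ℝ × ℝ)) ↔
      (1 ≤ x ∧ x + y ≤ σ + τ - 1 ∧ x - y ≤ σ + τ - 1 ∧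
        y - x ≤ σ - 1 - τ ∧ -y - x ≤ σ - 1 - τ) := by
  constructor
  · intro h
    have hK : Convex ℝ {p : ℝ × ℝ | 1 ≤ p.1 ∧ p.1 + p.2 ≤ σ + τ - 1 ∧ p.1 - p.2 ≤ σ + τ - 1 ∧
        p.2 - p.1 ≤ σ - 1 - τ ∧ -p.2 - p.1 ≤ σ - 1 - τ} := by
      intro p hp q hq a b ha hb hab
      obtain ⟨hp1, hp2, hp3, hp4, hp5⟩ := hp
      obtain ⟨hq1, hq2, hq3, hq4, hq5⟩ := hq
      simp only [Set.mem_setOf_eq, Prod.fst_add, Prod.snd_add, Prod.smul_fst, Prod.smul_snd,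
        smul_eq_mul]
      refine ⟨?_, ?_, ?_, ?_, ?_⟩ <;>
        nlinarith [mul_le_mul_of_nonneg_left hp1 ha, mul_le_mul_of_nonneg_left hq1 hb,
          mul_le_mul_of_nonneg_left hp2 ha, mul_le_mul_of_nonneg_left hq2 hb,
          mul_le_mul_of_nonneg_left hp3 ha, mul_le_mul_of_nonneg_left hq3 hb,
          mul_le_mul_of_nonneg_left hp4 ha, mul_le_mul_of_nonneg_left hq4 hb,
          mul_le_mul_of_nonneg_left hp5 ha, mul_le_mul_of_nonneg_left hq5 hb]
    have hsub : ({(σ + τ - 1, 0), (τ, σ - 1), (τ, -(σ - 1)), (1, σ - τ), (1, -(σ - τ))} :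
        Set (ℝ × ℝ)) ⊆ {p : ℝ × ℝ | 1 ≤ p.1 ∧ p.1 + p.2 ≤ σ + τ - 1 ∧ p.1 - p.2 ≤ σ + τ - 1 ∧
        p.2 - p.1 ≤ σ - 1 - τ ∧ -p.2 - p.1 ≤ σ - 1 - τ} := by
      intro p hp
      simp only [Set.mem_insert_iff, Set.mem_singleton_iff] at hp
      rcases hp with rfl | rfl | rfl | rfl | rfl <;>
        exact ⟨by dsimp; linarith, by dsimp; linarith, by dsimp; linarith,
          by dsimp; linarith, by dsimp; linarith⟩
    exact convexHull_min hsub hK h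
  · rintro ⟨h1, h2, h3, h4, h5⟩
    by_cases hσ : σ ≤ 1
    · -- then σ = τ = 1, point is (1,0) = first vertex
      have hτ1 : τ = 1 := le_antisymm (hts.trans hσ) ht
      have hσ1 : σ = 1 := le_antisymm hσ (ht.trans hts)
      have hx1 : x = 1 := by linarith
      have hy0 : y = 0 := by linarith
      subst hx1; subst hy0
      apply subset_convexHull
      simp only [Set.mem_insert_iff, Set.mem_singleton_iff, Prod.mk.injEq]
      exact Or.inl ⟨by linarith, trivial⟩
    · push_neg at hσ
      rcases le_total 0 y with hy | hy
      · by_cases hcase : (τ - 1) * y ≤ (σ - 1) * (x - 1)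
        · have e1 : (0:ℝ) ≤ (σ - 1) * (σ + τ - 1 - x - y) :=
            mul_nonneg (by linarith) (by linarith)
          have e2 : (0:ℝ) ≤ 2 * y * (σ + τ - 2) := by
            have := mul_nonneg hy (show (0:ℝ) ≤ σ + τ - 2 by linarith)
            linarith [this]
          have hp : (0:ℝ) < (σ - 1) * (σ + τ - 2) :=
            mul_pos (by linarith) (by linarith)
          refine boyer_mem5 _ _ _ _ _ _ _ _ _ _ x y
            (2 * ((σ - 1) * (x - 1) - (τ - 1) * y)) (2 * y * (σ + τ - 2)) 0
            ((σ - 1) * (σ + τ - 1 - x - y)) ((σ - 1) * (σ + τ - 1 - x - y))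
            (by linarith) e2 le_rfl e1 e1 (by linarith [hp]) (by ring) (by ring)
        · push_neg at hcase
          have hτ : 1 < τ := by
            rcases lt_or_ge 1 τ with h | h
            · exact h
            · have hτ1 : τ = 1 := le_antisymm h ht
              have h0 : (τ - 1) * y = 0 := by rw [hτ1]; ring
              have h0' : (0:ℝ) ≤ (σ - 1) * (x - 1) :=
                mul_nonneg (by linarith) (by linarith)
              linarith
          have hστ : τ < σ := by
            rcases lt_or_ge τ σ with h | h
            · exact h
            · have hστ1 : σ = τ := le_antisymm h hts
              have h0 : (τ - 1) * y ≤ (τ - 1) * (x - 1) :=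
                mul_le_mul_of_nonneg_left (by linarith) (by linarith)
              have h0' : (σ - 1) * (x - 1) = (τ - 1) * (x - 1) := by rw [hστ1]
              linarith
          have e1 : (0:ℝ) ≤ (τ - 1) * (σ - τ - y + x - 1) :=
            mul_nonneg (by linarith) (by linarith)
          have e2 : (0:ℝ) ≤ 2 * (x - 1) * (σ - τ) := by
            have := mul_nonneg (show (0:ℝ) ≤ x - 1 by linarith)
              (show (0:ℝ) ≤ σ - τ by linarith)
            linarith [this]
          have hp : (0:ℝ) < (τ - 1) * (σ - τ) :=
            mul_pos (by linarith) (by linarith)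
          refine boyer_mem5 _ _ _ _ _ _ _ _ _ _ x y
            0 (2 * (x - 1) * (σ - τ)) 0
            (2 * ((τ - 1) * y - (σ - 1) * (x - 1)) + (τ - 1) * (σ - τ - y + x - 1))
            ((τ - 1) * (σ - τ - y + x - 1))
            le_rfl e2 le_rfl (by linarith [hcase.le]) e1 (by linarith [hp])
            (by ring) (by ring)
      · by_cases hcase : (τ - 1) * (-y) ≤ (σ - 1) * (x - 1)
        · have e1 : (0:ℝ) ≤ (σ - 1) * (σ + τ - 1 - x + y) :=
            mul_nonneg (by linarith) (by linarith)
          have e2 : (0:ℝ) ≤ 2 * (-y) * (σ + τ - 2) := by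
            have := mul_nonneg (show (0:ℝ) ≤ -y by linarith)
              (show (0:ℝ) ≤ σ + τ - 2 by linarith)
            linarith [this]
          have hp : (0:ℝ) < (σ - 1) * (σ + τ - 2) :=
            mul_pos (by linarith) (by linarith)
          refine boyer_mem5 _ _ _ _ _ _ _ _ _ _ x y
            (2 * ((σ - 1) * (x - 1) - (τ - 1) * (-y))) 0 (2 * (-y) * (σ + τ - 2))
            ((σ - 1) * (σ + τ - 1 - x + y)) ((σ - 1) * (σ + τ - 1 - x + y))
            (by linarith) le_rfl e2 e1 e1 (by linarith [hp]) (by ring) (by ring)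
        · push_neg at hcase
          have hτ : 1 < τ := by
            rcases lt_or_ge 1 τ with h | h
            · exact h
            · have hτ1 : τ = 1 := le_antisymm h ht
              have h0 : (τ - 1) * (-y) = 0 := by rw [hτ1]; ring
              have h0' : (0:ℝ) ≤ (σ - 1) * (x - 1) :=
                mul_nonneg (by linarith) (by linarith)
              linarith
          have hστ : τ < σ := by
            rcases lt_or_ge τ σ with h | h
            · exact h
            · have hστ1 : σ = τ := le_antisymm h hts
              have h0 : (τ - 1) * (-y) ≤ (τ - 1) * (x - 1) :=
                mul_le_mul_of_nonneg_left (by linarith) (by linarith)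
              have h0' : (σ - 1) * (x - 1) = (τ - 1) * (x - 1) := by rw [hστ1]
              linarith
          have e1 : (0:ℝ) ≤ (τ - 1) * (σ - τ + y + x - 1) :=
            mul_nonneg (by linarith) (by linarith)
          have e2 : (0:ℝ) ≤ 2 * (x - 1) * (σ - τ) := by
            have := mul_nonneg (show (0:ℝ) ≤ x - 1 by linarith)
              (show (0:ℝ) ≤ σ - τ by linarith)
            linarith [this]
          have hp : (0:ℝ) < (τ - 1) * (σ - τ) :=
            mul_pos (by linarith) (by linarith)
          refine boyer_mem5 _ _ _ _ _ _ _ _ _ _ x y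
            0 0 (2 * (x - 1) * (σ - τ))
            ((τ - 1) * (σ - τ + y + x - 1))
            (2 * ((τ - 1) * (-y) - (σ - 1) * (x - 1)) + (τ - 1) * (σ - τ + y + x - 1))
            le_rfl le_rfl e2 e1 (by linarith [hcase.le]) (by linarith [hp])
            (by ring) (by ring)



/-- Boyer's multiplicity function `m_{s,t}(r,i) ∈ {0,1}`:
`m s t r i = 1` iff either
(i) `t ≤ r ≤ s+t-1`, `|i| ≤ s+t-1-r` and `i ≡ s+t-1-r (mod 2)`, or
(ii) `max 1 (t-s+1) ≤ r ≤ t`, `|i| ≤ s-1-(t-r)` and `i ≡ s-t-1+r (mod 2)`. -/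
def boyerM (s t r i : ℤ) : ℤ :=
  if (t ≤ r ∧ r ≤ s + t - 1 ∧ |i| ≤ s + t - 1 - r ∧ i % 2 = (s + t - 1 - r) % 2)
      ∨ (max 1 (t - s + 1) ≤ r ∧ r ≤ t ∧ |i| ≤ s - 1 - (t - r) ∧
          i % 2 = (s - t - 1 + r) % 2)
  then 1 else 0

/-- for `s ≥ t ≥ 1`, `m_{s,t}(r,i) = 1` iff `(r,i)` lies in the convex hull
of the pentagon `(s+t-1,0), (t, ±(s-1)), (1, ±(s-t))` and `i ≡ s+t-1-r (mod 2)`. -/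
theorem boyerM_eq_one_iff_mem_convexHull_pentagon (s t : ℤ) (hts : t ≤ s) (ht : 1 ≤ t)
    (r i : ℤ) :
    boyerM s t r i = 1 ↔
      (((r : ℝ), (i : ℝ)) ∈ convexHull ℝ
          ({(((s + t - 1 : ℤ) : ℝ), (0 : ℝ)),
            (((t : ℤ) : ℝ), ((s - 1 : ℤ) : ℝ)),
            (((t : ℤ) : ℝ), ((-(s - 1) : ℤ) : ℝ)),
            ((1 : ℝ), ((s - t : ℤ) : ℝ)),
            ((1 : ℝ), ((-(s - t) : ℤ) : ℝ))} : Set (ℝ × ℝ)) ∧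
        i % 2 = (s + t - 1 - r) % 2) := by
  have key := boyer_hull_iff_real (s : ℝ) (t : ℝ) (r : ℝ) (i : ℝ)
    (by exact_mod_cast ht) (by exact_mod_cast hts)
  rw [boyerM]
  rw [show (((s + t - 1 : ℤ) : ℝ)) = (s:ℝ) + (t:ℝ) - 1 by push_cast; ring,
    show (((s - 1 : ℤ) : ℝ)) = (s:ℝ) - 1 by push_cast; ring,
    show (((-(s - 1) : ℤ) : ℝ)) = -((s:ℝ) - 1) by push_cast; ring,
    show (((s - t : ℤ) : ℝ)) = (s:ℝ) - (t:ℝ) by push_cast; ring,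
    show (((-(s - t) : ℤ) : ℝ)) = -((s:ℝ) - (t:ℝ)) by push_cast; ring,
    show (((t : ℤ) : ℝ)) = (t:ℝ) from rfl]
  rw [key]
  have c1 : (1 ≤ (r:ℝ)) ↔ (1 ≤ r) := by exact_mod_cast Iff.rfl
  have c2 : ((r:ℝ) + (i:ℝ) ≤ (s:ℝ) + (t:ℝ) - 1) ↔ (r + i ≤ s + t - 1) := by
    constructor <;> intro h <;> [exact_mod_cast h; exact_mod_cast h]
  have c3 : ((r:ℝ) - (i:ℝ) ≤ (s:ℝ) + (t:ℝ) - 1) ↔ (r - i ≤ s + t - 1) := by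
    constructor <;> intro h <;> [exact_mod_cast h; exact_mod_cast h]
  have c4 : ((i:ℝ) - (r:ℝ) ≤ (s:ℝ) - 1 - (t:ℝ)) ↔ (i - r ≤ s - 1 - t) := by
    constructor <;> intro h <;> [exact_mod_cast h; exact_mod_cast h]
  have c5 : (-(i:ℝ) - (r:ℝ) ≤ (s:ℝ) - 1 - (t:ℝ)) ↔ (-i - r ≤ s - 1 - t) := by
    constructor <;> intro h <;> [exact_mod_cast h; exact_mod_cast h]
  rw [c1, c2, c3, c4, c5]
  split_ifs with hc
  · simp only [abs_le] at hc
    constructor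
    · intro _
      refine ⟨⟨?_, ?_, ?_, ?_, ?_⟩, ?_⟩ <;> omega
    · intro _; rfl
  · simp only [abs_le] at hc
    constructor
    · intro h; exact absurd h (by norm_num)
    · intro h; exfalso; omega
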